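/- arXiv:2406.12791 — 3 statements merged into one kernel-verified Lean document; each statement's English description precedes it below -/
import Mathlib

section
/- Let m ≥ 1 be an integer and k = pq with p, q primes satisfying p > m+1 and q > 2(m+1). Let F ∈ ℂ[X] be a non-constant polynomial such that F(cos(2πa/k)) ∈ ℚ for each a = 1, 2, ..., k−1. Then deg F > m. -/
open Polynomial Real IntermediateField

private lemma cos_as_zeta (k a : ℕ) :
    ((Real.cos (2 * π * a / k) : ℝ) : ℂ) =
      (Complex.exp (2 * π * Complex.I / k) ^ a +
        (Complex.exp (2 * π * Complex.I / k) ^ a)⁻¹) / 2 := by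
  have h1 : ((2 * π * (a : ℝ) / (k : ℝ) : ℝ) : ℂ) * Complex.I
      = (a : ℂ) * (2 * π * Complex.I / (k : ℂ)) := by
    push_cast
    ring
  rw [Complex.ofReal_cos]
  simp only [Complex.cos]
  rw [neg_mul, h1, Complex.exp_neg, Complex.exp_nat_mul]

set_option maxHeartbeats 1600000 in
set_option synthInstance.maxHeartbeats 400000 in
/-- Let `m ≥ 1` and `k = pq` with `p, q` primes, `p > m + 1`, `q > 2(m + 1)`.
If `F ∈ ℂ[X]` is non-constant and `F(cos(2πa/k)) ∈ ℚ` for each `a = 1, …, k-1`,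
then `deg F > m`. -/
theorem rational_values_force_large_degree (m p q : ℕ) (hm : 1 ≤ m)
    (hp : Nat.Prime p) (hq : Nat.Prime q) (hpm : m + 1 < p) (hqm : 2 * (m + 1) < q)
    (k : ℕ) (hk : k = p * q) (F : Polynomial ℂ) (hF : 0 < F.natDegree)
    (hval : ∀ a : ℕ, 1 ≤ a → a ≤ k - 1 →
      F.eval ((Real.cos (2 * π * a / k) : ℝ) : ℂ) ∈ Set.range ((↑) : ℚ → ℂ)) :
    m < F.natDegree := by
  by_contra hcon
  push_neg at hcon
  set n := F.natDegree with hn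
  have hppos : 0 < p := hp.pos
  have hqpos : 0 < q := hq.pos
  have hp2 : 2 < p := by omega
  have hq4 : 4 < q := by omega
  have hkpos : 0 < k := by rw [hk]; positivity
  have hk0 : k ≠ 0 := hkpos.ne'
  set ζ := Complex.exp (2 * π * Complex.I / k) with hζdef
  have hζ : IsPrimitiveRoot ζ k := Complex.isPrimitiveRoot_exp k hk0
  have hζ0 : ζ ≠ 0 := Complex.exp_ne_zero _
  -- the shifting number s
  obtain ⟨s, hsq, hsp1, hsp2⟩ :
      ∃ s : ℕ, q ∣ s ∧ (∀ t : ℕ, t < p - 1 → ¬ p ∣ (1 + t * s)) ∧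
        (∀ d : ℕ, 0 < d → d < p → ¬ k ∣ d * s) := by
    by_cases hpq : p = q
    · refine ⟨p, by rw [hpq], ?_, ?_⟩
      · intro t _ hdvd
        have h1 : p ∣ t * p := dvd_mul_left p t
        have h2 : p ∣ 1 := (Nat.dvd_add_right h1).mp (by rwa [Nat.add_comm] at hdvd)
        have := Nat.le_of_dvd one_pos h2
        omega
      · intro d hd0 hdp hdvd
        rw [hk, ← hpq] at hdvd
        obtain ⟨c, hc⟩ := hdvd
        have hd : d = p * c := by
          have : d * p = (p * c) * p := by rw [hc]; ring
          exact Nat.eq_of_mul_eq_mul_right hppos this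
        rcases Nat.eq_zero_or_pos c with rfl | hcpos
        · omega
        · have : p * 1 ≤ p * c := Nat.mul_le_mul_left p hcpos
          omega
    · have hco : Nat.Coprime q p := (Nat.coprime_primes hq hp).mpr (Ne.symm hpq)
      obtain ⟨s, hs1, hs2⟩ := Nat.chineseRemainder hco 0 1
      refine ⟨s, Nat.modEq_zero_iff_dvd.mp hs1, ?_, ?_⟩
      · intro t ht hdvd
        have h1 : 1 + t * s ≡ 1 + t * 1 [MOD p] := Nat.ModEq.add_left 1 (Nat.ModEq.mul_left t hs2)
        rw [mul_one] at h1
        have h2 : p ∣ 1 + t :=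
          (Nat.modEq_zero_iff_dvd).mp (((Nat.modEq_zero_iff_dvd).mpr hdvd).symm.trans h1).symm
        have := Nat.le_of_dvd (by omega) h2
        omega
      · intro d hd0 hdp hdvd
        have hpk : p ∣ k := ⟨q, hk⟩
        have hpd : p ∣ d * s := dvd_trans hpk hdvd
        have h1 : d * s ≡ d * 1 [MOD p] := Nat.ModEq.mul_left d hs2
        rw [mul_one] at h1
        have h2 : p ∣ d :=
          (Nat.modEq_zero_iff_dvd).mp (((Nat.modEq_zero_iff_dvd).mpr hpd).symm.trans h1).symm
        have := Nat.le_of_dvd hd0 h2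
        omega
  -- coprimality of the exponents
  have hjcop : ∀ t : ℕ, t < p - 1 → Nat.Coprime (1 + t * s) k := by
    intro t ht
    rw [hk]
    refine Nat.Coprime.mul_right ?_ ?_
    · exact ((Nat.Prime.coprime_iff_not_dvd hp).mpr (hsp1 t ht)).symm
    · obtain ⟨s0, rfl⟩ := hsq
      have h : 1 + t * (q * s0) = 1 + (t * s0) * q := by ring
      rw [h]
      exact (Nat.coprime_add_mul_right_left 1 q (t * s0)).mpr (Nat.coprime_one_left q)
  -- distinctness of the candidate roots
  have hct : ∀ t t' : ℕ, t < p - 1 → t' < p - 1 → t ≠ t' →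
      (ζ ^ (1 + t * s) + (ζ ^ (1 + t * s))⁻¹) / 2 ≠
        (ζ ^ (1 + t' * s) + (ζ ^ (1 + t' * s))⁻¹) / 2 := by
    have key : ∀ a b : ℕ, b < a → a < p - 1 → ζ ^ (1 + a * s) = ζ ^ (1 + b * s) → False := by
      intro a b hba hap heq'
      have ha : a = b + (a - b) := by omega
      rw [ha, add_mul, ← add_assoc, pow_add] at heq'
      have h1 : ζ ^ ((a - b) * s) = 1 := by
        have h0 : ζ ^ (1 + b * s) ≠ 0 := pow_ne_zero _ hζ0
        field_simp at heq'
        exact heq'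
      have h2 : k ∣ (a - b) * s := (hζ.pow_eq_one_iff_dvd _).mp h1
      exact hsp2 (a - b) (by omega) (by omega) h2
    intro t t' ht ht' hne heq
    set u := ζ ^ (1 + t * s) with hu_def
    set v := ζ ^ (1 + t' * s) with hv_def
    have hu : u ≠ 0 := pow_ne_zero _ hζ0
    have hv : v ≠ 0 := pow_ne_zero _ hζ0
    have hfac : (u - v) * (u * v - 1) = 0 := by
      field_simp at heq
      linear_combination heq
    rcases mul_eq_zero.mp hfac with h | h
    · have huv : u = v := by rwa [sub_eq_zero] at h
      rcases hne.lt_or_gt with hlt | hlt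
      · exact key t' t hlt ht' huv.symm
      · exact key t t' hlt ht huv
    · have huv : ζ ^ ((1 + t * s) + (1 + t' * s)) = 1 := by
        rw [pow_add]
        rwa [sub_eq_zero] at h
      have hdvd := (hζ.pow_eq_one_iff_dvd _).mp huv
      have hqd : q ∣ (1 + t * s) + (1 + t' * s) := dvd_trans ⟨p, by rw [hk]; ring⟩ hdvd
      obtain ⟨s0, rfl⟩ := hsq
      have h2' : (1 + t * (q * s0)) + (1 + t' * (q * s0)) = (t * s0 + t' * s0) * q + 2 := by ring
      rw [h2'] at hqd
      have hq2 : q ∣ 2 := (Nat.dvd_add_right (dvd_mul_left q (t * s0 + t' * s0))).mp hqd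
      have := Nat.le_of_dvd (by norm_num) hq2
      omega
  -- the cyclotomic field machinery
  have hζZint : IsIntegral ℤ ζ := hζ.isIntegral hkpos
  have hζint : IsIntegral ℚ ζ := hζZint.tower_top
  haveI : FiniteDimensional ℚ ℚ⟮ζ⟯ := IntermediateField.adjoin.finiteDimensional hζint
  set z : ℚ⟮ζ⟯ := IntermediateField.AdjoinSimple.gen ℚ ζ with hzdef
  have hz : algebraMap ℚ⟮ζ⟯ ℂ z = ζ := IntermediateField.AdjoinSimple.algebraMap_gen ℚ ζ
  set PB := IntermediateField.adjoin.powerBasis hζint with hPBdef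
  have hPBgen : PB.gen = z := rfl
  have hmin : minpoly ℚ PB.gen = Polynomial.cyclotomic k ℚ := by
    rw [hPBgen, hzdef]
    exact (IntermediateField.minpoly_gen ℚ ζ).trans (Polynomial.cyclotomic_eq_minpoly_rat hζ hkpos).symm
  have hroot : ∀ j : ℕ, Nat.Coprime j k → Polynomial.aeval (ζ ^ j) (minpoly ℚ PB.gen) = 0 := by
    intro j hj
    rw [hmin, Polynomial.aeval_def, ← Polynomial.eval_map, Polynomial.map_cyclotomic]
    exact (hζ.pow_of_coprime j hj).isRoot_cyclotomic hkpos
  set w : ℚ⟮ζ⟯ := z ^ p with hwdef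
  have hw : algebraMap ℚ⟮ζ⟯ ℂ w = ζ ^ p := by rw [hwdef, map_pow, hz]
  have hwint : IsIntegral ℚ w := IsIntegral.of_finite ℚ w
  set w' : ℚ⟮w⟯ := IntermediateField.AdjoinSimple.gen ℚ w with hw'def
  have hw' : (ℚ⟮w⟯.val) w' = w := IntermediateField.AdjoinSimple.algebraMap_gen ℚ w
  set PBE := IntermediateField.adjoin.powerBasis hwint with hPBEdef
  have hPBEgen : PBE.gen = w' := rfl
  set α := (ℚ⟮ζ⟯.val).comp (ℚ⟮w⟯.val) with hαdef
  have hα : ∀ x : ℚ⟮w⟯, α x = algebraMap ℚ⟮ζ⟯ ℂ ((ℚ⟮w⟯.val) x) := fun x => rfl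
  have hαw : α w' = ζ ^ p := by rw [hα, hw', hw]
  -- the complex nodes
  set Nc : ℕ → ℂ := fun b => ((Real.cos (2 * π * (b + 1 : ℕ) / q) : ℝ) : ℂ) with hNcdef
  have hζpq : ζ ^ p = Complex.exp (2 * π * Complex.I / q) := by
    rw [hζdef, ← Complex.exp_nat_mul]
    congr 1
    rw [hk]
    have hp0 : (p : ℂ) ≠ 0 := Nat.cast_ne_zero.mpr hppos.ne'
    have hq0 : (q : ℂ) ≠ 0 := Nat.cast_ne_zero.mpr hqpos.ne'
    push_cast
    field_simp
  -- nodes over the small field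
  set N : ℕ → ℚ⟮w⟯ := fun b => (w' ^ (b + 1) + (w' ^ (b + 1))⁻¹) / 2 with hNdef
  have hαN : ∀ b : ℕ, α (N b) = Nc b := by
    intro b
    have h1 : α (N b) = ((ζ ^ p) ^ (b + 1) + ((ζ ^ p) ^ (b + 1))⁻¹) / 2 := by
      rw [hNdef]
      simp only [map_div₀, map_add, map_pow, map_inv₀, map_ofNat, hαw]
    rw [h1, hζpq]
    exact (cos_as_zeta q (b + 1)).symm
  -- injectivity of the complex nodes
  have hNcinj : Set.InjOn Nc (Finset.range (n + 1) : Set ℕ) := by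
    intro b hb b' hb' heq
    simp only [Finset.coe_range, Set.mem_Iio] at hb hb'
    have hqR : (0 : ℝ) < q := by exact_mod_cast hqpos
    have hicc : ∀ c : ℕ, c < n + 1 → 2 * π * (c + 1 : ℕ) / q ∈ Set.Icc 0 π := by
      intro c hc
      constructor
      · positivity
      · rw [div_le_iff₀ hqR]
        have h1 : ((c : ℝ) + 1) * 2 ≤ q := by
          have : (c + 1) * 2 ≤ q := by omega
          exact_mod_cast this
        push_cast
        calc 2 * π * ((c : ℝ) + 1) = π * (((c : ℝ) + 1) * 2) := by ring
          _ ≤ π * q := mul_le_mul_of_nonneg_left h1 (le_of_lt Real.pi_pos)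
    have hcos : Real.cos (2 * π * (b + 1 : ℕ) / q) = Real.cos (2 * π * (b' + 1 : ℕ) / q) :=
      Complex.ofReal_injective heq
    have harg := Real.injOn_cos (hicc b hb) (hicc b' hb') hcos
    have h3 : 2 * π / (q : ℝ) ≠ 0 := by positivity
    have hbb : ((b + 1 : ℕ) : ℝ) = ((b' + 1 : ℕ) : ℝ) := by
      apply mul_left_cancel₀ h3
      calc 2 * π / (q : ℝ) * ((b + 1 : ℕ) : ℝ) = 2 * π * ((b + 1 : ℕ) : ℝ) / q := by ring
        _ = 2 * π * ((b' + 1 : ℕ) : ℝ) / q := harg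
        _ = 2 * π / (q : ℝ) * ((b' + 1 : ℕ) : ℝ) := by ring
    have : b + 1 = b' + 1 := by exact_mod_cast hbb
    omega
  have hNinj : Set.InjOn N (Finset.range (n + 1) : Set ℕ) := by
    intro b hb b' hb' heq
    exact hNcinj hb hb' (by rw [← hαN b, ← hαN b', heq])
  -- rational values at the nodes
  have hexval : ∀ b : ℕ, ∃ c : ℚ, b < n + 1 → F.eval (Nc b) = (c : ℂ) := by
    intro b
    by_cases hb : b < n + 1
    · have hb1 : b + 1 ≤ m + 1 := by omega
      have ha1 : 1 ≤ p * (b + 1) := Nat.one_le_iff_ne_zero.mpr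
        (Nat.mul_ne_zero hppos.ne' (by omega))
      have ha2 : p * (b + 1) ≤ k - 1 := by
        have hlt : p * (b + 1) < k := by
          rw [hk]
          exact Nat.mul_lt_mul_of_le_of_lt (le_refl p) (by omega) hppos
        omega
      obtain ⟨c, hc⟩ := hval (p * (b + 1)) ha1 ha2
      refine ⟨c, fun _ => ?_⟩
      have harg : (2 * π * ((p * (b + 1) : ℕ) : ℝ) / (k : ℝ)) = 2 * π * ((b + 1 : ℕ) : ℝ) / q := by
        rw [hk]
        have hp0 : (p : ℝ) ≠ 0 := Nat.cast_ne_zero.mpr hppos.ne'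
        have hq0 : (q : ℝ) ≠ 0 := Nat.cast_ne_zero.mpr hqpos.ne'
        push_cast
        field_simp
      rw [harg] at hc
      exact hc.symm
    · exact ⟨0, fun h => absurd h hb⟩
  choose rb hrb using hexval
  -- the interpolating polynomial over ℚ⟮w⟯
  set R : ℕ → ℚ⟮w⟯ := fun b => algebraMap ℚ _ (rb b) with hRdef
  set G := Lagrange.interpolate (Finset.range (n + 1)) N R with hGdef
  have hFdeg : F.degree < ((Finset.range (n + 1)).card : WithBot ℕ) := by
    rw [Finset.card_range]
    refine lt_of_le_of_lt Polynomial.degree_le_natDegree ?_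
    exact_mod_cast Nat.lt_succ_self n
  have hFi : F = Lagrange.interpolate (Finset.range (n + 1)) Nc (fun b => ((rb b : ℚ) : ℂ)) :=
    Lagrange.eq_interpolate_of_eval_eq _ hNcinj hFdeg
      (fun b hb => hrb b (Finset.mem_range.mp hb))
  have hGmapdeg : (G.map α.toRingHom).degree < ((Finset.range (n + 1)).card : WithBot ℕ) :=
    lt_of_le_of_lt Polynomial.degree_map_le (Lagrange.degree_interpolate_lt _ hNinj)
  have hGi : G.map α.toRingHom
      = Lagrange.interpolate (Finset.range (n + 1)) Nc (fun b => ((rb b : ℚ) : ℂ)) := by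
    apply Lagrange.eq_interpolate_of_eval_eq _ hNcinj hGmapdeg
    intro b hb
    rw [← hαN b, Polynomial.eval_map, show α (N b) = α.toRingHom (N b) from rfl,
      Polynomial.eval₂_at_apply, hGdef, Lagrange.eval_interpolate_at_node _ hNinj hb]
    exact (α.commutes (rb b)).trans (eq_ratCast (algebraMap ℚ ℂ) (rb b))
  have hFG : F = G.map α.toRingHom := by rw [hFi, hGi]
  -- the value at cos(2π/k)
  have hk115 : 1 ≤ k - 1 := by
    have : 15 ≤ k := by rw [hk]; nlinarith
    omega
  obtain ⟨r0, hr0⟩ := hval 1 le_rfl hk115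
  -- hr0 : ↑r0 = F.eval ↑(cos (2π·1/k))
  set u : ℚ⟮ζ⟯ := (z + z⁻¹) / 2 with hudef
  have hu : algebraMap ℚ⟮ζ⟯ ℂ u = ((Real.cos (2 * π * (1 : ℕ) / k) : ℝ) : ℂ) := by
    rw [hudef, map_div₀, map_add, map_inv₀, hz, map_ofNat, cos_as_zeta k 1, pow_one]
  set H := G.map (ℚ⟮w⟯.val.toRingHom) with hHdef
  have hFH : F = H.map (algebraMap ℚ⟮ζ⟯ ℂ) := by
    rw [hFG, hHdef, Polynomial.map_map]
    rfl
  have hHu : H.eval u = algebraMap ℚ ℚ⟮ζ⟯ r0 := by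
    apply (algebraMap ℚ⟮ζ⟯ ℂ).injective
    have h1 : (H.map (algebraMap ℚ⟮ζ⟯ ℂ)).eval (algebraMap ℚ⟮ζ⟯ ℂ u)
        = algebraMap ℚ⟮ζ⟯ ℂ (H.eval u) := by
      conv_lhs => rw [Polynomial.eval_map]
      exact Polynomial.eval₂_at_apply (p := H) (algebraMap ℚ⟮ζ⟯ ℂ) u
    rw [← h1, hu, ← hFH, ← hr0, ← IsScalarTower.algebraMap_apply ℚ ℚ⟮ζ⟯ ℂ]
    exact (eq_ratCast (algebraMap ℚ ℂ) r0).symm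
  -- evaluation at the conjugate points
  have hFct : ∀ t : ℕ, t < p - 1 →
      F.eval ((ζ ^ (1 + t * s) + (ζ ^ (1 + t * s))⁻¹) / 2) = (r0 : ℂ) := by
    intro t ht
    set σ := PB.lift (ζ ^ (1 + t * s)) (hroot (1 + t * s) (hjcop t ht)) with hσdef
    have hσz : σ z = ζ ^ (1 + t * s) := PB.lift_gen _ _
    have hσw : σ w = ζ ^ p := by
      rw [hwdef, map_pow, hσz, ← pow_mul]
      have h1 : (1 + t * s) * p = p + t * s * p := by ring
      rw [h1, pow_add]
      have h2 : ζ ^ (t * s * p) = 1 := by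
        refine (hζ.pow_eq_one_iff_dvd _).mpr ?_
        rw [hk, show t * s * p = p * (t * s) by ring]
        exact mul_dvd_mul_left p (hsq.mul_left t)
      rw [h2, mul_one]
    have hβα : σ.comp ℚ⟮w⟯.val = α := by
      apply PBE.algHom_ext
      rw [hPBEgen]
      change σ ((ℚ⟮w⟯.val) w') = α w'
      rw [hw', hσw, hαw]
    have hσu : σ u = (ζ ^ (1 + t * s) + (ζ ^ (1 + t * s))⁻¹) / 2 := by
      rw [hudef, map_div₀, map_add, map_inv₀, hσz, map_ofNat]
    have hFσ : F = H.map σ.toRingHom := by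
      rw [hFG, hHdef, Polynomial.map_map]
      congr 1
      rw [← hβα]
      rfl
    rw [← hσu, hFσ, Polynomial.eval_map, show σ u = σ.toRingHom u from rfl]
    have h3 : H.eval₂ σ.toRingHom (σ.toRingHom u) = σ.toRingHom (H.eval u) :=
      Polynomial.eval₂_at_apply (p := H) σ.toRingHom u
    rw [h3, hHu]
    show σ (algebraMap ℚ ℚ⟮ζ⟯ r0) = (r0 : ℂ)
    exact (σ.commutes r0).trans (eq_ratCast (algebraMap ℚ ℂ) r0)
  -- too many roots
  set P := F - Polynomial.C ((r0 : ℚ) : ℂ) with hPdef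
  have hP0 : P ≠ 0 := by
    intro h0
    have hFC : F = Polynomial.C ((r0 : ℚ) : ℂ) := by rwa [sub_eq_zero] at h0
    have : F.natDegree = 0 := by rw [hFC, Polynomial.natDegree_C]
    omega
  have hPdeg : P.natDegree ≤ m := by
    rw [hPdef, Polynomial.natDegree_sub_C]
    exact hcon
  set ct : ℕ → ℂ := fun t => (ζ ^ (1 + t * s) + (ζ ^ (1 + t * s))⁻¹) / 2 with hctdef
  have hsub : (Finset.range (p - 1)).image ct ⊆ P.roots.toFinset := by
    intro x hx
    simp only [Finset.mem_image, Finset.mem_range] at hx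
    obtain ⟨t, ht, rfl⟩ := hx
    rw [Multiset.mem_toFinset, Polynomial.mem_roots hP0]
    show P.IsRoot (ct t)
    rw [hPdef, Polynomial.IsRoot, Polynomial.eval_sub, Polynomial.eval_C, hctdef]
    rw [hFct t ht, sub_self]
  have hcardim : ((Finset.range (p - 1)).image ct).card = p - 1 := by
    rw [Finset.card_image_of_injOn, Finset.card_range]
    intro t ht t' ht' h
    simp only [Finset.coe_range, Set.mem_Iio] at ht ht'
    by_contra hne
    exact hct t t' ht ht' hne h
  have hfinal : p - 1 ≤ P.natDegree := by
    calc p - 1 = ((Finset.range (p - 1)).image ct).card := hcardim.symm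
      _ ≤ P.roots.toFinset.card := Finset.card_le_card hsub
      _ ≤ Multiset.card P.roots := Multiset.toFinset_card_le _
      _ ≤ P.natDegree := Polynomial.card_roots' P
  omega
end

section
/- Suppose every pair (x,y) of entire functions solving X² − (z²−1)Y² = 1 has the form x + yw = ε(z+w)^n exp(hw) with ε ∈ {±1}, n ∈ ℤ, h entire, w = √(z²−1) (the classification theorem). If additionally x, y are polynomials, then (x,y) = (±x_n, y_n) for some integer n, where x_n + y_n w = (z+w)^n. -/
open Polynomial

/-- `(xₙ, yₙ)` for `n : ℕ`, so that `xₙ + yₙ w = (z + w)ⁿ`, `w = √(z² - 1)`. -/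
noncomputable def pellN : ℕ → Polynomial ℂ × Polynomial ℂ
  | 0 => (1, 0)
  | n + 1 =>
      (X * (pellN n).1 + (X ^ 2 - 1) * (pellN n).2,
       (pellN n).1 + X * (pellN n).2)

/-- `(xₙ, yₙ)` for `n : ℤ`. -/
noncomputable def pellZ (n : ℤ) : Polynomial ℂ × Polynomial ℂ :=
  if 0 ≤ n then pellN n.toNat else ((pellN (-n).toNat).1, -(pellN (-n).toNat).2)

lemma pellZ_neg_nat (k : ℕ) : pellZ (-(k:ℤ)) = ((pellN k).1, -(pellN k).2) := by
  cases k with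
  | zero => simp [pellZ, pellN]
  | succ k =>
      rw [pellZ, if_neg (by push_cast; omega)]
      norm_num

lemma pellZ_ofNat (k : ℕ) : pellZ (k:ℤ) = pellN k := by
  simp [pellZ]

lemma pellZ_zero : pellZ 0 = (1, 0) := by
  have := pellZ_ofNat 0
  simpa [pellN] using this

lemma pellZ_add_one (m : ℤ) : pellZ (m+1) =
    (X * (pellZ m).1 + (X ^ 2 - 1) * (pellZ m).2, (pellZ m).1 + X * (pellZ m).2) := by
  rcases le_or_gt 0 m with hm | hm
  · lift m to ℕ using hm
    have h1 : ((m:ℤ)+1) = ((m+1 : ℕ) : ℤ) := by push_cast; ring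
    rw [h1, pellZ_ofNat, pellZ_ofNat]
    rfl
  · obtain ⟨k, rfl⟩ : ∃ k : ℕ, m = -((k:ℤ)+1) := ⟨(-m).toNat - 1, by omega⟩
    have h1 : -((k:ℤ)+1) + 1 = -(k:ℤ) := by ring
    have h2 : -((k:ℤ)+1) = -(((k+1:ℕ)):ℤ) := by push_cast; ring
    rw [h1, h2, pellZ_neg_nat, pellZ_neg_nat]
    have hx : (pellN (k+1)).1 = X * (pellN k).1 + (X ^ 2 - 1) * (pellN k).2 := rfl
    have hy : (pellN (k+1)).2 = (pellN k).1 + X * (pellN k).2 := rfl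
    refine Prod.ext ?_ ?_ <;> simp only [hx, hy] <;> ring

lemma pellZ_sub_one (m : ℤ) : pellZ (m-1) =
    (X * (pellZ m).1 - (X ^ 2 - 1) * (pellZ m).2, X * (pellZ m).2 - (pellZ m).1) := by
  have h := pellZ_add_one (m-1)
  rw [sub_add_cancel] at h
  rw [h]
  refine Prod.ext ?_ ?_ <;> simp <;> ring

lemma monicX2 : (X ^ 2 - 1 : Polynomial ℂ).Monic := by
  simpa using monic_X_pow_sub_C (1:ℂ) (n := 2) (by norm_num)

lemma degX2 : (X ^ 2 - 1 : Polynomial ℂ).natDegree = 2 := by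
  compute_degree!

lemma deg_facts (P Q : Polynomial ℂ) (hQ : Q ≠ 0) (h : P ^ 2 - (X ^ 2 - 1) * Q ^ 2 = 1) :
    P.natDegree = Q.natDegree + 1 ∧ P.leadingCoeff ^ 2 = Q.leadingCoeff ^ 2 := by
  have hP2 : P ^ 2 = (X ^ 2 - 1) * Q ^ 2 + 1 := by linear_combination h
  have hXne : (X ^ 2 - 1 : Polynomial ℂ) ≠ 0 := monicX2.ne_zero
  have hQ2 : Q ^ 2 ≠ 0 := pow_ne_zero _ hQ
  have hR : ((X ^ 2 - 1) * Q ^ 2).natDegree = 2 + 2 * Q.natDegree := by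
    rw [natDegree_mul hXne hQ2, degX2, natDegree_pow]
  have hRne : (X ^ 2 - 1) * Q ^ 2 ≠ 0 := mul_ne_zero hXne hQ2
  have hdlt : (1 : Polynomial ℂ).degree < ((X ^ 2 - 1) * Q ^ 2).degree := by
    rw [degree_one, degree_eq_natDegree hRne, hR]
    exact_mod_cast (by omega : 0 < 2 + 2 * Q.natDegree)
  have hdeg : (P ^ 2).natDegree = 2 + 2 * Q.natDegree := by
    rw [hP2, natDegree_add_eq_left_of_degree_lt hdlt, hR]
  have hlc : (P ^ 2).leadingCoeff = ((X ^ 2 - 1) * Q ^ 2).leadingCoeff := by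
    rw [hP2, leadingCoeff_add_of_degree_lt' hdlt]
  constructor
  · have h2 := natDegree_pow P 2
    omega
  · have := hlc
    rw [leadingCoeff_pow, leadingCoeff_mul, leadingCoeff_pow, monicX2.leadingCoeff, one_mul] at this
    exact this

lemma drop (P Q : Polynomial ℂ) (hQ : Q ≠ 0) (h : P ^ 2 - (X ^ 2 - 1) * Q ^ 2 = 1)
    (hlc : P.leadingCoeff = Q.leadingCoeff) : (X * Q - P).degree < Q.degree := by
  have hPne : P ≠ 0 := by
    rintro rfl
    simp only [leadingCoeff_zero] at hlc
    exact hQ (leadingCoeff_eq_zero.mp hlc.symm)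
  obtain ⟨hd, -⟩ := deg_facts P Q hQ h
  by_cases hA : P - X * Q = 0
  · have : X * Q - P = 0 := by linear_combination -hA
    rw [this, degree_zero]
    exact bot_lt_iff_ne_bot.mpr (degree_ne_bot.mpr hQ)
  · set d := Q.natDegree with hdd
    have hXQd : (X * Q).natDegree = d + 1 := by
      rw [natDegree_mul X_ne_zero hQ, natDegree_X]; omega
    have hcoeffB : (P + X * Q).coeff (d + 1) = 2 * Q.leadingCoeff := by
      rw [coeff_add]
      have h1 : P.coeff (d+1) = Q.leadingCoeff := by
        rw [← hlc, ← hd]; rfl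
      have h2 : (X * Q).coeff (d+1) = Q.leadingCoeff := by
        have : (X * Q).leadingCoeff = Q.leadingCoeff := by
          rw [leadingCoeff_mul, leadingCoeff_X, one_mul]
        rw [← hXQd]
        rw [← this]; rfl
      rw [h1, h2]; ring
    have hlcQ : Q.leadingCoeff ≠ 0 := leadingCoeff_ne_zero.mpr hQ
    have hBne : P + X * Q ≠ 0 := fun hB => by
      rw [hB, coeff_zero] at hcoeffB
      exact hlcQ (by simpa using hcoeffB.symm)
    have hBdeg : (P + X * Q).natDegree = d + 1 := by
      apply le_antisymm
      · apply natDegree_add_le_of_degree_le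
        · exact le_of_eq hd
        · exact le_of_eq hXQd
      · exact le_natDegree_of_ne_zero (by rw [hcoeffB]; exact mul_ne_zero two_ne_zero hlcQ)
    have hAB : (P - X * Q) * (P + X * Q) = 1 - Q ^ 2 := by
      linear_combination h
    have hABdeg : (P - X * Q).natDegree + (d + 1) = (1 - Q ^ 2).natDegree := by
      rw [← hBdeg, ← natDegree_mul hA hBne, hAB]
    have h1Qdeg : (1 - Q ^ 2).natDegree ≤ 2 * d := by
      refine (natDegree_sub_le_iff_left ?_).mpr ?_
      · rw [natDegree_pow]
      · rw [natDegree_one]; omega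
    have hAd : (P - X * Q).natDegree < d := by omega
    have : (X * Q - P) = -(P - X * Q) := by ring
    rw [this, degree_neg]
    exact degree_lt_degree hAd

lemma compose (P Q : Polynomial ℂ) (m : ℤ)
    (h1 : X * P - (X ^ 2 - 1) * Q = (pellZ m).1 ∨ X * P - (X ^ 2 - 1) * Q = -(pellZ m).1)
    (h2 : X * Q - P = (pellZ m).2) :
    ∃ n : ℤ, (P = (pellZ n).1 ∨ P = -(pellZ n).1) ∧ Q = (pellZ n).2 := by
  rcases h1 with h1 | h1
  · refine ⟨m+1, Or.inl ?_, ?_⟩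
    · rw [pellZ_add_one]
      linear_combination X * h1 + (X ^ 2 - 1) * h2
    · rw [pellZ_add_one]
      linear_combination h1 + X * h2
  · refine ⟨m-1, Or.inr ?_, ?_⟩
    · rw [pellZ_sub_one]
      linear_combination X * h1 + (X ^ 2 - 1) * h2
    · rw [pellZ_sub_one]
      linear_combination h1 + X * h2

lemma key : ∀ d : ℕ, ∀ P Q : Polynomial ℂ, Q.natDegree ≤ d →
    P ^ 2 - (X ^ 2 - 1) * Q ^ 2 = 1 →
    ∃ n : ℤ, (P = (pellZ n).1 ∨ P = -(pellZ n).1) ∧ Q = (pellZ n).2 := by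
  intro d
  induction d using Nat.strong_induction_on with
  | _ d IH =>
  have aux : ∀ P Q : Polynomial ℂ, Q ≠ 0 → Q.natDegree ≤ d →
      P ^ 2 - (X ^ 2 - 1) * Q ^ 2 = 1 → P.leadingCoeff = Q.leadingCoeff →
      ∃ n : ℤ, (P = (pellZ n).1 ∨ P = -(pellZ n).1) ∧ Q = (pellZ n).2 := by
    intro P Q hQ hdeg heq hlc
    have heq' : (X * P - (X ^ 2 - 1) * Q) ^ 2
        - (X ^ 2 - 1) * (X * Q - P) ^ 2 = 1 := by linear_combination heq
    have hlt := drop P Q hQ heq hlc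
    by_cases hQ'0 : X * Q - P = 0
    · have hsq : (X * P - (X ^ 2 - 1) * Q) ^ 2 = 1 := by
        linear_combination heq' + (X ^ 2 - 1) * (X * Q - P) * hQ'0
      have h1 : (X * P - (X ^ 2 - 1) * Q - 1) * (X * P - (X ^ 2 - 1) * Q + 1) = 0 := by
        linear_combination hsq
      apply compose P Q 0
      · rw [pellZ_zero]
        rcases mul_eq_zero.mp h1 with h | h
        · left; linear_combination h
        · right; linear_combination h
      · rw [pellZ_zero, hQ'0]
    · have hQ'deg : (X * Q - P).natDegree < Q.natDegree :=
        natDegree_lt_natDegree hQ'0 hlt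
      obtain ⟨m, hm1, hm2⟩ := IH (X * Q - P).natDegree (lt_of_lt_of_le hQ'deg hdeg)
        (X * P - (X ^ 2 - 1) * Q) (X * Q - P) le_rfl heq'
      exact compose P Q m hm1 hm2
  intro P Q hdeg heq
  by_cases hQ : Q = 0
  · subst hQ
    have hsq : P ^ 2 = 1 := by linear_combination heq
    have h1 : (P - 1) * (P + 1) = 0 := by linear_combination hsq
    refine ⟨0, ?_, by rw [pellZ_zero]⟩
    rw [pellZ_zero]
    rcases mul_eq_zero.mp h1 with h | h
    · left; linear_combination h
    · right; linear_combination h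
  · obtain ⟨-, hlc2⟩ := deg_facts P Q hQ heq
    by_cases hs : P.leadingCoeff = Q.leadingCoeff
    · exact aux P Q hQ hdeg heq hs
    · have hneg : (-P).leadingCoeff = Q.leadingCoeff := by
        rw [leadingCoeff_neg]
        have h0 : (P.leadingCoeff - Q.leadingCoeff) * (P.leadingCoeff + Q.leadingCoeff) = 0 := by
          linear_combination hlc2
        rcases mul_eq_zero.mp h0 with h | h
        · exact absurd (by linear_combination h) hs
        · linear_combination -h
      have heq' : (-P) ^ 2 - (X ^ 2 - 1) * Q ^ 2 = 1 := by linear_combination heq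
      obtain ⟨n, hn1, hn2⟩ := aux (-P) Q hQ hdeg heq' hneg
      refine ⟨n, ?_, hn2⟩
      rcases hn1 with h | h
      · right; linear_combination -h
      · left; linear_combination -h

/-- Assuming the classification of entire solutions of `X² - (z²-1)Y² = 1`
(each has the form `x + yw = ε (z+w)ⁿ exp(hw)`), every polynomial solution is
`(± xₙ, yₙ)` for some integer `n`. -/
theorem denef_from_classification
    (classification : ∀ x y : ℂ → ℂ, Differentiable ℂ x → Differentiable ℂ y →
      (∀ z : ℂ, x z ^ 2 - (z ^ 2 - 1) * y z ^ 2 = 1) →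
      ∃ (ε : ℂ) (n : ℤ) (h : ℂ → ℂ), (ε = 1 ∨ ε = -1) ∧ Differentiable ℂ h ∧
        ∀ z w : ℂ, w ^ 2 = z ^ 2 - 1 →
          x z + y z * w = ε * (z + w) ^ n * Complex.exp (h z * w))
    (P Q : Polynomial ℂ)
    (hPQ : P ^ 2 - (X ^ 2 - 1) * Q ^ 2 = 1) :
    ∃ n : ℤ, (P = (pellZ n).1 ∨ P = -(pellZ n).1) ∧ Q = (pellZ n).2 :=
  key Q.natDegree P Q le_rfl hPQ
end

section
/- Let m ≥ 1, and let p, q be primes with p > m+1 and q > 2(m+1), k = pq. Suppose g ∈ ℂ[z] is a nonzero polynomial of degree at most m/2 − 1 and that for every root z₀ of y_k, the value g(z₀)²(z₀²−1) is an integer. Then F(z) = g(z)²(z²−1) satisfies F(cos(2πa/k)) ∈ ℤ for all a = 1,...,k−1, and this leads to a contradiction: no such g exists. -/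
open Polynomial Real

/-- The shifted Chebyshev polynomials of the second kind: `y₀ = 0`, `y₁ = 1`,
`y_{n+1} = 2z yₙ - y_{n-1}` (so `yₙ = U_{n-1}`). -/
noncomputable def ych : ℕ → Polynomial ℂ
  | 0 => 0
  | 1 => 1
  | n + 2 => 2 * X * ych (n + 1) - ych n

lemma ych_eq (n : ℕ) : ych n = Chebyshev.U ℂ ((n : ℤ) - 1) := by
  suffices h : ∀ n : ℕ, ych n = Chebyshev.U ℂ ((n : ℤ) - 1) ∧
      ych (n+1) = Chebyshev.U ℂ (((n+1 : ℕ) : ℤ) - 1) from (h n).1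
  intro n
  induction n with
  | zero => simp [ych, Chebyshev.U_neg_one, Chebyshev.U_zero]
  | succ n ih =>
    refine ⟨ih.2, ?_⟩
    show ych (n + 2) = _
    rw [ych, ih.1, ih.2]
    have h2 : (((n+2:ℕ) : ℤ) - 1) = ((n:ℤ) - 1) + 2 := by push_cast; ring
    rw [h2, Chebyshev.U_add_two]
    have h3 : (((n+1:ℕ) : ℤ) - 1) = ((n:ℤ) - 1) + 1 := by push_cast; ring
    rw [h3]

lemma ych_root_aux {k : ℕ} (θ : ℝ) (h1 : Real.sin (k * θ) = 0)
    (h2 : Real.sin θ ≠ 0) : (ych k).eval ((Real.cos θ : ℝ) : ℂ) = 0 := by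
  have h := Polynomial.Chebyshev.U_complex_cos (θ : ℂ) ((k : ℤ) - 1)
  have hkθ : (((k : ℤ) - 1 : ℤ) + 1) * (θ : ℂ) = ((k * θ : ℝ) : ℂ) := by
    push_cast; ring
  rw [hkθ] at h
  have h1' : Complex.sin ((k * θ : ℝ) : ℂ) = 0 := by
    rw [← Complex.ofReal_sin, h1, Complex.ofReal_zero]
  rw [h1'] at h
  have hs : Complex.sin (θ : ℂ) ≠ 0 := by
    rw [← Complex.ofReal_sin]
    exact_mod_cast h2
  rw [ych_eq, Complex.ofReal_cos]
  exact (mul_eq_zero.mp h).resolve_right hs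

lemma cos_of_exp (θ : ℂ) :
    (Complex.exp (θ * Complex.I) + (Complex.exp (θ * Complex.I))⁻¹) / 2 = Complex.cos θ := by
  rw [← Complex.exp_neg, show -(θ * Complex.I) = -θ * Complex.I by ring,
    Complex.exp_mul_I, Complex.exp_mul_I, Complex.cos_neg, Complex.sin_neg]
  ring

set_option maxHeartbeats 2000000 in
/-- Let `m ≥ 1`, `p, q` primes with `p > m + 1`, `q > 2(m+1)`, `k = pq`. If
`g ∈ ℂ[z]` is nonzero of degree at most `m/2 - 1` and `g(z₀)²(z₀² - 1) ∈ ℤ` at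
every root `z₀` of `y_k`, then `F = g²(z² - 1)` takes integer values at
`cos(2πa/k)` for `a = 1, …, k - 1` — and this is a contradiction: no such `g`
exists. -/
theorem no_such_g (m p q : ℕ) (hm : 1 ≤ m) (hp : Nat.Prime p) (hq : Nat.Prime q)
    (hpm : m + 1 < p) (hqm : 2 * (m + 1) < q) (k : ℕ) (hk : k = p * q)
    (g : Polynomial ℂ) (hg0 : g ≠ 0) (hdeg : g.natDegree ≤ m / 2 - 1)
    (hint : ∀ z₀ : ℂ, (ych k).eval z₀ = 0 →
      ∃ n : ℤ, (g.eval z₀) ^ 2 * (z₀ ^ 2 - 1) = (n : ℂ)) :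
    (∀ a : ℕ, 1 ≤ a → a ≤ k - 1 →
      ∃ n : ℤ, (g ^ 2 * (X ^ 2 - 1)).eval ((Real.cos (2 * π * a / k) : ℝ) : ℂ)
        = (n : ℂ)) ∧ False := by
  have hp3 : 3 ≤ p := by omega
  have hq5 : 5 ≤ q := by omega
  have hpodd : Odd p := hp.odd_of_ne_two (by omega)
  have hqodd : Odd q := hq.odd_of_ne_two (by omega)
  have hkodd : Odd k := by rw [hk]; exact hpodd.mul hqodd
  have hk15 : 15 ≤ k := by
    rw [hk]; calc (15:ℕ) = 3 * 5 := rfl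
      _ ≤ p * q := Nat.mul_le_mul hp3 hq5
  have hk0 : 0 < k := by omega
  have hkR : (k : ℝ) ≠ 0 := Nat.cast_ne_zero.mpr (by omega)
  have hkRpos : (0:ℝ) < k := by exact_mod_cast hk0
  set F := g ^ 2 * (X ^ 2 - 1) with hF
  have hX2 : (X ^ 2 - 1 : Polynomial ℂ) ≠ 0 := by
    rw [show (X ^ 2 - 1 : Polynomial ℂ) = X ^ 2 - C 1 by rw [map_one]]
    exact X_pow_sub_C_ne_zero (by norm_num) 1
  have hF0 : F ≠ 0 := mul_ne_zero (pow_ne_zero 2 hg0) hX2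
  have hdF : F.natDegree = 2 * g.natDegree + 2 := by
    rw [hF, natDegree_mul (pow_ne_zero 2 hg0) hX2, natDegree_pow,
      show (X ^ 2 - 1 : Polynomial ℂ) = X ^ 2 - C 1 by rw [map_one],
      natDegree_X_pow_sub_C]
  have hFeval : ∀ z : ℂ, F.eval z = (g.eval z) ^ 2 * (z ^ 2 - 1) := by
    intro z; rw [hF]; simp [eval_mul, eval_pow, eval_sub, eval_one]
  -- integer values at the nodes cos (π a / k), 0 < a < k
  have hval : ∀ a : ℕ, 0 < a → a < k →
      ∃ n : ℤ, F.eval ((Real.cos (π * a / k) : ℝ) : ℂ) = (n : ℂ) := by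
    intro a ha0 hak
    have hs0 : Real.sin ((k:ℝ) * (π * a / k)) = 0 := by
      rw [show (k:ℝ) * (π * a / k) = a * π by field_simp]
      exact Real.sin_nat_mul_pi a
    have hsne : Real.sin (π * a / k) ≠ 0 := by
      apply ne_of_gt
      apply Real.sin_pos_of_pos_of_lt_pi
      · apply div_pos (mul_pos Real.pi_pos (by exact_mod_cast ha0)) hkRpos
      · rw [div_lt_iff₀ hkRpos]
        have : (a:ℝ) < k := by exact_mod_cast hak
        nlinarith [Real.pi_pos]
    obtain ⟨n, hn⟩ := hint _ (ych_root_aux _ hs0 hsne)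
    exact ⟨n, by rw [hFeval]; exact hn⟩
  -- Part 1
  have part1 : ∀ a : ℕ, 1 ≤ a → a ≤ k - 1 →
      ∃ n : ℤ, F.eval ((Real.cos (2 * π * a / k) : ℝ) : ℂ) = (n : ℂ) := by
    intro a ha1 hak
    have hs0 : Real.sin ((k:ℝ) * (2 * π * a / k)) = 0 := by
      rw [show (k:ℝ) * (2 * π * a / k) = ((2 * a : ℕ) : ℝ) * π by push_cast; field_simp]
      exact Real.sin_nat_mul_pi (2 * a)
    have hsne : Real.sin (2 * π * a / k) ≠ 0 := by
      intro hcon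
      obtain ⟨n, hn⟩ := Real.sin_eq_zero_iff.mp hcon
      have h2 : (n:ℝ) * k * π = 2 * π * a := by
        field_simp at hn
        linear_combination π * hn
      have h3 : π * ((n:ℝ) * k) = π * (2 * a) := by ring_nf; ring_nf at h2; linarith
      have h4 : (n:ℝ) * k = 2 * a := mul_left_cancel₀ Real.pi_ne_zero h3
      have h5 : (n:ℤ) * k = 2 * a := by exact_mod_cast h4
      have h6 : (k:ℤ) ∣ 2 * a := Dvd.intro_left n h5
      have h7 : k ∣ 2 * a := by exact_mod_cast h6
      have h8 : Nat.Coprime k 2 := Nat.coprime_two_right.mpr hkodd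
      have h9 : k ∣ a := h8.dvd_of_dvd_mul_left h7
      have := Nat.le_of_dvd (by omega) h9
      omega
    obtain ⟨n, hn⟩ := hint _ (ych_root_aux _ hs0 hsne)
    exact ⟨n, by rw [hFeval]; exact hn⟩
  refine ⟨part1, ?_⟩
  -- ====== Part 2: the contradiction ======
  classical
  obtain ⟨v, hv⟩ := hval 1 one_pos (by omega)
  set N := 2 * k with hN
  have hN0 : N ≠ 0 := by omega
  set ζ : ℂ := Complex.exp (2 * π * Complex.I / N) with hζdef
  have hζ : IsPrimitiveRoot ζ N := Complex.isPrimitiveRoot_exp N hN0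
  have hζint : IsIntegral ℚ ζ := (hζ.isIntegral (by omega)).tower_top
  set L := IntermediateField.adjoin ℚ ({ζ} : Set ℂ) with hLdef
  set ζL : L := IntermediateField.AdjoinSimple.gen ℚ ζ with hζL
  set pb : PowerBasis ℚ L := IntermediateField.adjoin.powerBasis hζint with hpb
  set ι : L →+* ℂ := (algebraMap L ℂ) with hι
  have hιζ : ι ζL = ζ := rfl
  have hιint : ∀ n : ℤ, ι ((n : ℤ) : L) = (n : ℂ) := fun n => map_intCast ι n
  set αL : ℕ → L := fun a => (ζL ^ a + (ζL ^ a)⁻¹) / 2 with hαL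
  have hζpow : ∀ a : ℕ, ζ ^ a = Complex.exp (((π * a / k : ℝ)) * Complex.I) := by
    intro a
    rw [← Complex.exp_nat_mul]
    congr 1
    have hkC : (k : ℂ) ≠ 0 := Nat.cast_ne_zero.mpr (by omega)
    rw [hN]
    push_cast
    field_simp
  have hαexp : ∀ a : ℕ, ι (αL a) = (ζ ^ a + (ζ ^ a)⁻¹) / 2 := by
    intro a
    rw [hαL]
    simp only [map_div₀, map_add, map_pow, map_inv₀, map_ofNat, hιζ]
  have hαcoe : ∀ a : ℕ, ι (αL a) = ((Real.cos (π * a / k) : ℝ) : ℂ) := by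
    intro a
    rw [hαexp a, hζpow a, cos_of_exp, Complex.ofReal_cos]
  -- the set of "t"s
  set T : Finset ℕ :=
    ((Finset.range p).filter fun s => ¬ p ∣ (1 + 2 * q * s)).image fun s => 1 + 2 * q * s
    with hT
  have hTmem : ∀ t ∈ T, ∃ s, s < p ∧ t = 1 + 2 * q * s ∧ ¬ p ∣ t := by
    intro t ht
    rw [hT] at ht
    simp only [Finset.mem_image, Finset.mem_filter, Finset.mem_range] at ht
    obtain ⟨s, ⟨hs, hnd⟩, rfl⟩ := ht
    exact ⟨s, hs, rfl, hnd⟩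
  have hT1 : 1 ∈ T := by
    rw [hT]
    simp only [Finset.mem_image, Finset.mem_filter, Finset.mem_range]
    exact ⟨0, ⟨by omega, by simpa using hp.one_lt.ne'⟩, by ring⟩
  have hTprops : ∀ t ∈ T, t % 2 = 1 ∧ t % (2 * q) = 1 ∧ 1 ≤ t ∧ t ≤ 2 * k - 1
      ∧ Nat.Coprime t N := by
    intro t ht
    obtain ⟨s, hs, rfl, hnd⟩ := hTmem t ht
    have hmul : 2 * q * s ≤ 2 * q * (p - 1) := Nat.mul_le_mul_left _ (by omega)
    have hb : 1 + 2 * q * s ≤ 2 * k - 1 := by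
      have h1 : 2 * q * (p - 1) + 2 * q = 2 * (p * q) := by
        have h2 : (p - 1) + 1 = p := by omega
        calc 2*q*(p-1) + 2*q = 2*q*((p-1)+1) := by ring
          _ = 2*(p*q) := by rw [h2]; ring
      rw [hk]
      omega
    have hmod2q : (1 + 2 * q * s) % (2 * q) = 1 := by
      rw [show 1 + 2 * q * s = 1 + (2*q) * s by ring, Nat.add_mul_mod_self_left,
        Nat.mod_eq_of_lt (by omega)]
    have hodd : (1 + 2 * q * s) % 2 = 1 := by
      rw [show 1 + 2 * q * s = 1 + 2 * (q * s) by ring, Nat.add_mul_mod_self_left]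
    refine ⟨hodd, hmod2q, by omega, hb, ?_⟩
    have hc2 : Nat.Coprime (1 + 2 * q * s) 2 :=
      Nat.coprime_two_right.mpr (Nat.odd_iff.mpr hodd)
    have hcp : Nat.Coprime (1 + 2 * q * s) p := (hp.coprime_iff_not_dvd.mpr hnd).symm
    have hcq : Nat.Coprime (1 + 2 * q * s) q := by
      have h3 : Nat.Coprime (1 + q * (2 * s)) q :=
        (Nat.coprime_add_mul_left_left 1 q (2 * s)).mpr (Nat.coprime_one_left q)
      rwa [show 1 + q * (2 * s) = 1 + 2 * q * s by ring] at h3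
    have : Nat.Coprime (1 + 2 * q * s) (2 * (p * q)) :=
      Nat.Coprime.mul_right hc2 (Nat.Coprime.mul_right hcp hcq)
    rwa [hN, hk, show 2 * (p * q) = 2 * (p * q) from rfl]
  have hTcard : p - 1 ≤ T.card := by
    rw [hT]
    rw [Finset.card_image_of_injective _ (by
      intro a b hab
      simp only at hab
      have := Nat.add_left_cancel hab
      exact Nat.eq_of_mul_eq_mul_left (by omega) this)]
    have hsplit := Finset.card_filter_add_card_filter_not
      (s := Finset.range p) (p := fun s => p ∣ (1 + 2 * q * s))
    have hbad : ((Finset.range p).filter fun s => p ∣ (1 + 2 * q * s)).card ≤ 1 := by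
      apply Finset.card_le_one.mpr
      intro a ha b hb
      simp only [Finset.mem_filter, Finset.mem_range] at ha hb
      -- p divides the difference 2q(b - a)
      have key : ∀ a b : ℕ, a ≤ b → b < p → p ∣ (1 + 2 * q * a) → p ∣ (1 + 2 * q * b) → a = b := by
        intro a b hab hbp hda hdb
        have hd : p ∣ 2 * q * (b - a) := by
          have : 2 * q * (b - a) = (1 + 2 * q * b) - (1 + 2 * q * a) := by
            rw [Nat.mul_sub]
            omega
          rw [this]
          exact Nat.dvd_sub hdb hda
        have hpq : ¬ p ∣ q ∨ p = q := by
          by_cases h : p = q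
          · right; exact h
          · left; intro hdvd
            exact h ((Nat.prime_dvd_prime_iff_eq hp hq).mp hdvd)
        rcases hpq with hpq | rfl
        · have h2 : ¬ p ∣ 2 := fun h => by
            have := Nat.le_of_dvd (by norm_num) h
            omega
          have h4 := (Nat.Prime.dvd_mul hp).mp hd
          rcases h4 with h | h
          · rcases (Nat.Prime.dvd_mul hp).mp h with h' | h'
            · exact absurd h' h2
            · exact absurd h' hpq
          · have h0 : b - a = 0 := Nat.eq_zero_of_dvd_of_lt h (by omega)
            omega
        · -- p = q : then p ∣ 1 + 2 p a and p ∣ 2 p a gives p ∣ 1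
          exfalso
          have : p ∣ 2 * p * a := ⟨2 * a, by ring⟩
          have h1 : p ∣ 1 := (Nat.dvd_add_right this).mp (by rwa [Nat.add_comm] at hda)
          have := Nat.le_of_dvd one_pos h1
          omega
      rcases le_total a b with h | h
      · exact key a b h hb.1 ha.2 hb.2
      · exact (key b a h ha.1 hb.2 ha.2).symm
    rw [Finset.card_range] at hsplit
    omega
  -- ===== interpolation at the nodes cos(π p b / k), b = 1..q-1 =====
  set s0 : Finset ℕ := Finset.Icc 1 (q - 1) with hs0
  have hs0card : s0.card = q - 1 := by rw [hs0, Nat.card_Icc]; omega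
  have hpblt : ∀ b ∈ s0, 0 < p * b ∧ p * b < k := by
    intro b hb
    rw [hs0, Finset.mem_Icc] at hb
    have h1 : p * b ≤ p * (q - 1) := Nat.mul_le_mul_left _ hb.2
    have h2 : p * (q - 1) + p = p * q := by
      have h3 : (q - 1) + 1 = q := by omega
      calc p * (q-1) + p = p * ((q-1)+1) := by ring
        _ = p * q := by rw [h3]
    have hb1 : 1 ≤ b := hb.1
    have hpb : p ≤ p * b := Nat.le_mul_of_pos_right p (by omega)
    rw [hk]
    omega
  have hrealinj : ∀ a ∈ s0, ∀ b ∈ s0,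
      Real.cos (π * (p * a : ℕ) / k) = Real.cos (π * (p * b : ℕ) / k) → a = b := by
    intro a ha b hb hcos
    have hmem : ∀ c ∈ s0, π * ((p * c : ℕ) : ℝ) / k ∈ Set.Icc 0 π := by
      intro c hc
      constructor
      · positivity
      · rw [div_le_iff₀ hkRpos]
        have h1 : ((p * c : ℕ) : ℝ) ≤ (k : ℝ) := by
          exact_mod_cast le_of_lt (hpblt c hc).2
        nlinarith [Real.pi_pos]
    have := Real.injOn_cos (hmem a ha) (hmem b hb) hcos
    field_simp at this
    have h' : ((p * a : ℕ) : ℝ) = ((p * b : ℕ) : ℝ) := by linarith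
    have h'' : p * a = p * b := by exact_mod_cast h'
    exact Nat.eq_of_mul_eq_mul_left (by omega) h''
  set vnode : ℕ → L := fun b => αL (p * b) with hvnode
  have hinj : Set.InjOn vnode s0 := by
    intro a ha b hb he
    have h1 : ι (vnode a) = ι (vnode b) := by rw [he]
    rw [hvnode] at h1
    simp only at h1
    rw [hαcoe, hαcoe] at h1
    have h2 := Complex.ofReal_inj.mp h1
    exact hrealinj a ha b hb h2
  have hvb : ∀ b ∈ s0, ∃ n : ℤ,
      F.eval ((Real.cos (π * (p * b : ℕ) / k) : ℝ) : ℂ) = (n : ℂ) := by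
    intro b hb
    exact hval (p * b) (hpblt b hb).1 (hpblt b hb).2
  choose! nval hnval using hvb
  set rL : ℕ → L := fun b => ((nval b : ℤ) : L) with hrL
  set P : Polynomial L := Lagrange.interpolate s0 vnode rL with hP
  have hPdeg : P.natDegree ≤ q - 2 := by
    by_cases hP0 : P = 0
    · rw [hP0]; simp
    · have h1 := Lagrange.degree_interpolate_lt rL hinj
      rw [hs0card, ← hP] at h1
      have h2 := (Polynomial.natDegree_lt_iff_degree_lt hP0).mpr h1
      omega
  have hFdeg2 : F.natDegree ≤ q - 2 := by rw [hdF]; omega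
  have huniq : ∀ Q : Polynomial ℂ, Q.natDegree ≤ q - 2 →
      (∀ b ∈ s0, Q.eval ((Real.cos (π * (p * b : ℕ) / k) : ℝ) : ℂ) = ((nval b : ℤ) : ℂ)) →
      F = Q := by
    intro Q hQdeg hQval
    have hsub : F - Q = 0 := by
      apply Polynomial.eq_zero_of_natDegree_lt_card_of_eval_eq_zero' _
        (s0.image fun b => ((Real.cos (π * (p * b : ℕ) / k) : ℝ) : ℂ))
      · intro i hi
        simp only [Finset.mem_image] at hi
        obtain ⟨b, hb, rfl⟩ := hi
        rw [eval_sub, hnval b hb, hQval b hb, sub_self]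
      · rw [Finset.card_image_of_injOn (by
          intro a ha b hb he
          exact hrealinj a ha b hb (Complex.ofReal_inj.mp he)), hs0card]
        have h5 := Polynomial.natDegree_sub_le F Q
        have h6 : F.natDegree ⊔ Q.natDegree ≤ q - 2 := max_le hFdeg2 hQdeg
        omega
    have := sub_eq_zero.mp hsub
    exact this
  -- F is the image of P under the canonical embedding
  have hFP : F = P.map ι := by
    apply huniq
    · exact Polynomial.natDegree_map_le.trans hPdeg
    · intro b hb
      have e1 : ι (vnode b) = ((Real.cos (π * (p * b : ℕ) / k) : ℝ) : ℂ) := by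
        rw [hvnode]; exact hαcoe (p * b)
      rw [← e1, Polynomial.eval_map, Polynomial.eval₂_at_apply,
        Lagrange.eval_interpolate_at_node rL hinj hb]
      rw [hrL]
      exact map_intCast ι (nval b)
  have hPα1 : P.eval (αL 1) = ((v : ℤ) : L) := by
    apply ι.injective
    have h1 : ι (P.eval (αL 1)) = (P.map ι).eval (ι (αL 1)) := by
      rw [Polynomial.eval_map, Polynomial.eval₂_at_apply]
    rw [h1, ← hFP, hαcoe 1, hv]
    exact (map_intCast ι v).symm
  -- ===== the Galois conjugation step =====
  have hgen_eq : pb.gen = ζL := by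
    rw [hpb, IntermediateField.adjoin.powerBasis_gen, hζL]
  have key : ∀ t ∈ T, F.eval ((Real.cos (π * t / k) : ℝ) : ℂ) = (v : ℂ) := by
    intro t ht
    obtain ⟨sv, hslt, hts, hnd⟩ := hTmem t ht
    obtain ⟨hodd2, hmod, ht1, htb, hcop⟩ := hTprops t ht
    have hy : (Polynomial.aeval (ζ ^ t)) (minpoly ℚ pb.gen) = 0 := by
      rw [hgen_eq, hζL, (show minpoly ℚ (IntermediateField.AdjoinSimple.gen ℚ ζ) = minpoly ℚ ζ from IntermediateField.minpoly_gen ℚ ζ),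
        ← Polynomial.cyclotomic_eq_minpoly_rat hζ (by omega), Polynomial.aeval_def,
        Polynomial.eval₂_eq_eval_map, Polynomial.map_cyclotomic]
      exact (hζ.pow_of_coprime t hcop).isRoot_cyclotomic (by omega)
    set σ : (↥L) →+* ℂ := (pb.lift (ζ ^ t) hy).toRingHom with hσdef
    have hσζ : σ ζL = ζ ^ t := by
      have h1 := pb.lift_gen (ζ ^ t) hy
      rw [hgen_eq] at h1
      exact h1
    have hσα : ∀ a : ℕ, σ (αL a) = (ζ ^ (t * a) + (ζ ^ (t * a))⁻¹) / 2 := by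
      intro a
      simp only [hαL, map_div₀, map_add, map_pow, map_inv₀, map_ofNat, hσζ, ← pow_mul]
    have hexp_eq : ∀ b : ℕ, ζ ^ (t * (p * b)) = ζ ^ (p * b) := by
      intro b
      have h6 : t * (p * b) = p * b + N * (sv * b) := by rw [hts, hN, hk]; ring
      rw [h6, pow_add, pow_mul ζ N, hζ.pow_eq_one, one_pow, mul_one]
    have hσnode : ∀ b : ℕ, σ (αL (p * b)) = ι (αL (p * b)) := by
      intro b
      rw [hσα, hαexp, hexp_eq]
    have hFσ : F = P.map σ := by
      apply huniq
      · exact Polynomial.natDegree_map_le.trans hPdeg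
      · intro b hb
        have e1 : σ (vnode b) = ((Real.cos (π * (p * b : ℕ) / k) : ℝ) : ℂ) := by
          rw [hvnode]
          simp only
          rw [hσnode b, hαcoe]
        rw [← e1, Polynomial.eval_map, Polynomial.eval₂_at_apply,
          Lagrange.eval_interpolate_at_node rL hinj hb, hrL]
        exact map_intCast σ (nval b)
    have h7 : σ (αL 1) = ι (αL t) := by
      rw [hσα 1, hαexp t, Nat.mul_one]
    rw [← hαcoe t]
    calc F.eval (ι (αL t)) = (P.map σ).eval (σ (αL 1)) := by rw [← h7, ← hFσ]
      _ = σ (P.eval (αL 1)) := by rw [Polynomial.eval_map, Polynomial.eval₂_at_apply]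
      _ = (v : ℂ) := by rw [hPα1]; exact map_intCast σ v
  -- ===== distinctness of the points cos(π t / k), t ∈ T =====
  have hdist : ∀ t ∈ T, ∀ t' ∈ T,
      Real.cos (π * t / k) = Real.cos (π * t' / k) → t = t' := by
    intro t ht t' ht' hcos
    obtain ⟨s1, hs1, hts1, _⟩ := hTmem t ht
    obtain ⟨s2, hs2, hts2, _⟩ := hTmem t' ht'
    obtain ⟨_, _, ht1, htb, _⟩ := hTprops t ht
    obtain ⟨_, _, ht1', htb', _⟩ := hTprops t' ht'
    have e1 : (t:ℤ) = 1 + 2*q*s1 := by exact_mod_cast hts1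
    have e2 : (t':ℤ) = 1 + 2*q*s2 := by exact_mod_cast hts2
    have ek : (k:ℤ) = p*q := by exact_mod_cast hk
    rw [Real.cos_eq_cos_iff] at hcos
    obtain ⟨n, h | h⟩ := hcos
    · have h2 : π * (t':ℝ) = π * (2*n*k + t) := by
        field_simp at h
        ring_nf at h ⊢
        linear_combination π * h
      have h2' : (t':ℝ) = 2*n*k + t := mul_left_cancel₀ Real.pi_ne_zero h2
      have h3 : (t':ℤ) = 2*n*k + t := by exact_mod_cast h2'
      have h4 : ((2*k : ℕ) : ℤ) ∣ (t':ℤ) - t := ⟨n, by push_cast; linarith⟩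
      have h5 := Int.eq_zero_of_abs_lt_dvd h4 (by
        rw [abs_lt]
        constructor <;> push_cast <;> omega)
      omega
    · have h2 : π * (t':ℝ) = π * (2*n*k - t) := by
        field_simp at h
        ring_nf at h ⊢
        linear_combination π * h
      have h2' : (t':ℝ) = 2*n*k - t := mul_left_cancel₀ Real.pi_ne_zero h2
      have h3 : (t':ℤ) = 2*n*k - t := by exact_mod_cast h2'
      exfalso
      have h8 : (2:ℤ) = q * (2*n*p - 2*s1 - 2*s2) := by linear_combination (-1)*e1 + (-1)*e2 + h3 + 2*n*ek
      have hdvd : (q:ℤ) ∣ 2 := ⟨_, h8⟩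
      have := Int.le_of_dvd (by norm_num) hdvd
      omega
  -- ===== endgame =====
  by_cases hm2 : 2 ≤ m
  · -- here deg F < p - 1 ≤ #T, so F - v has too many roots
    have hdlt : F.natDegree < p - 1 := by rw [hdF]; omega
    set nodeC : ℕ → ℂ := fun t : ℕ => ((Real.cos (π * t / k) : ℝ) : ℂ) with hnodeC
    have hG : F - C ((v:ℤ):ℂ) = 0 := by
      apply Polynomial.eq_zero_of_natDegree_lt_card_of_eval_eq_zero' _ (T.image nodeC)
      · intro i hi
        simp only [Finset.mem_image] at hi
        obtain ⟨t, ht, rfl⟩ := hi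
        simp only [hnodeC]
        rw [eval_sub, key t ht, eval_C, sub_self]
      · have hcard : (T.image nodeC).card = T.card := Finset.card_image_of_injOn (by
          intro a ha b hb he
          simp only [hnodeC] at he
          exact hdist a ha b hb (Complex.ofReal_inj.mp he))
        rw [hcard]
        have h5 : (F - C ((v:ℤ):ℂ)).natDegree ≤ F.natDegree := by
          simpa using Polynomial.natDegree_sub_le F (C ((v:ℤ):ℂ))
        omega
    have h6 : F = C ((v:ℤ):ℂ) := sub_eq_zero.mp hG
    have h7 : F.natDegree = 0 := by rw [h6, natDegree_C]
    omega
  · -- m = 1 : g is a nonzero constant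
    have hm1 : m = 1 := by omega
    have hgdeg : g.natDegree = 0 := by
      have h1 := hdeg
      rw [hm1] at h1
      omega
    have hgC : g = C (g.coeff 0) := Polynomial.eq_C_of_natDegree_eq_zero hgdeg
    have hc0 : g.coeff 0 ≠ 0 := fun h => hg0 (by rw [hgC, h, map_zero])
    have hgz : ∀ z : ℂ, g.eval z = g.coeff 0 := by
      intro z
      rw [hgC]
      simp
    obtain ⟨t', ht', hne⟩ := Finset.exists_mem_ne (by omega : 1 < T.card) 1
    have k1 := key 1 hT1
    have k2 := key t' ht'
    obtain ⟨_, _, ht1', htb', _⟩ := hTprops t' ht'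
    have hsq : ((Real.cos (π * (1:ℕ) / k) : ℝ) : ℂ)^2 = ((Real.cos (π * t' / k) : ℝ) : ℂ)^2 := by
      have f1 := hFeval ((Real.cos (π * (1:ℕ) / k) : ℝ) : ℂ)
      have f2 := hFeval ((Real.cos (π * t' / k) : ℝ) : ℂ)
      rw [hgz] at f1 f2
      rw [k1] at f1
      rw [k2] at f2
      have e1 : (g.coeff 0)^2 * (((Real.cos (π * (1:ℕ) / k) : ℝ) : ℂ)^2 - 1)
          = (g.coeff 0)^2 * (((Real.cos (π * t' / k) : ℝ) : ℂ)^2 - 1) := by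
        rw [← f1, ← f2]
      have e2 := mul_left_cancel₀ (pow_ne_zero 2 hc0) e1
      linear_combination e2
    have hfac : (((Real.cos (π * (1:ℕ) / k) : ℝ) : ℂ) - ((Real.cos (π * t' / k) : ℝ) : ℂ))
        * (((Real.cos (π * (1:ℕ) / k) : ℝ) : ℂ) + ((Real.cos (π * t' / k) : ℝ) : ℂ)) = 0 := by
      linear_combination hsq
    rcases mul_eq_zero.mp hfac with h | h
    · have hxy : Real.cos (π * (1:ℕ) / k) = Real.cos (π * t' / k) :=
        Complex.ofReal_inj.mp (sub_eq_zero.mp h)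
      have h1t : (1:ℕ) = t' := hdist 1 hT1 t' ht' hxy
      exact hne h1t.symm
    · have hxy : Real.cos (π * (1:ℕ) / k) = - Real.cos (π * t' / k) := by
        have h' : ((Real.cos (π * (1:ℕ) / k) : ℝ) : ℂ) = - ((Real.cos (π * t' / k) : ℝ) : ℂ) := by
          linear_combination h
        exact_mod_cast h'
      rw [← Real.cos_pi_sub] at hxy
      rw [Real.cos_eq_cos_iff] at hxy
      have hkoddm : k % 2 = 1 := Nat.odd_iff.mp hkodd
      obtain ⟨n, h8 | h8⟩ := hxy
      · have h9 : π * ((k:ℝ) - t') = π * (2*n*k + 1) := by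
          field_simp at h8
          ring_nf at h8 ⊢
          linear_combination π * h8
        have h9' : (k:ℝ) - t' = 2*n*k + 1 := mul_left_cancel₀ Real.pi_ne_zero h9
        have h10 : (k:ℤ) - t' = 2*n*k + 1 := by exact_mod_cast h9'
        obtain ⟨j, hj⟩ : ∃ j : ℤ, (k:ℤ) - t' = 2*j + 1 := ⟨n*k, by linarith⟩
        omega
      · have h9 : π * ((k:ℝ) - t') = π * (2*n*k - 1) := by
          field_simp at h8
          ring_nf at h8 ⊢
          linear_combination π * h8
        have h9' : (k:ℝ) - t' = 2*n*k - 1 := mul_left_cancel₀ Real.pi_ne_zero h9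
        have h10 : (k:ℤ) - t' = 2*n*k - 1 := by exact_mod_cast h9'
        obtain ⟨j, hj⟩ : ∃ j : ℤ, (k:ℤ) - t' = 2*j - 1 := ⟨n*k, by linarith⟩
        omega
end
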